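/- arXiv:2104.00003 — 4 statements merged into one kernel-verified Lean document; each statement's English description precedes it below -/
import Mathlib

section
/- Let C be a real-valued function on d×d complex matrices that is bounded on the set D of density matrices and convex, i.e. C(tρ + (1−t)σ) ≤ t·C(ρ) + (1−t)·C(σ) for all t ∈ [0,1] and density matrices ρ, σ. Then for all quantum channels Θ₁, Θ₂, Λ and all t ∈ [0,1], the power function satisfies P_C(t·Θ₁ + (1−t)·Θ₂; Λ) ≤ t·P_C(Θ₁; Λ) + (1−t)·P_C(Θ₂; Λ). -/
open Matrix ComplexOrder

/-- A density matrix: positive semidefinite with trace 1. -/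
def IsDensity (d : ℕ) (ρ : Matrix (Fin d) (Fin d) ℂ) : Prop :=
  ρ.PosSemidef ∧ ρ.trace = 1

/-- A quantum channel: a map admitting a Kraus decomposition. -/
def IsChannel (d : ℕ) (Λ : Matrix (Fin d) (Fin d) ℂ → Matrix (Fin d) (Fin d) ℂ) : Prop :=
  ∃ (m : ℕ) (K : Fin m → Matrix (Fin d) (Fin d) ℂ),
    (∀ ρ, Λ ρ = ∑ i, K i * ρ * (K i)ᴴ) ∧ (∑ i, (K i)ᴴ * K i) = 1

/-- A channel is an incoherent operation induced by the coherence measure `C` (CMIO for `C`)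
if it does not increase `C` on any density matrix. -/
def IsCMIO (d : ℕ) (C : Matrix (Fin d) (Fin d) ℂ → ℝ)
    (Λ : Matrix (Fin d) (Fin d) ℂ → Matrix (Fin d) (Fin d) ℂ) : Prop :=
  ∀ ρ, IsDensity d ρ → C (Λ ρ) ≤ C ρ

/-- `C` is bounded on the set of density matrices. -/
def BoundedOnD (d : ℕ) (C : Matrix (Fin d) (Fin d) ℂ → ℝ) : Prop :=
  ∃ M : ℝ, ∀ ρ, IsDensity d ρ → |C ρ| ≤ M

/-- `C` is convex on density matrices. -/
def ConvexOnD (d : ℕ) (C : Matrix (Fin d) (Fin d) ℂ → ℝ) : Prop :=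
  ∀ t : ℝ, t ∈ Set.Icc (0 : ℝ) 1 → ∀ ρ σ : Matrix (Fin d) (Fin d) ℂ,
    IsDensity d ρ → IsDensity d σ →
    C (t • ρ + (1 - t) • σ) ≤ t * C ρ + (1 - t) * C σ

/-- The power of the channel `Θ` over the channel `Λ`:
`P_C(Θ; Λ) = sup_{ρ ∈ D} (C(Θ(ρ)) − C(Λ(ρ)))`. -/
noncomputable def power (d : ℕ) (C : Matrix (Fin d) (Fin d) ℂ → ℝ)
    (Θ Λ : Matrix (Fin d) (Fin d) ℂ → Matrix (Fin d) (Fin d) ℂ) : ℝ :=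
  sSup ((fun ρ => C (Θ ρ) - C (Λ ρ)) '' {ρ | IsDensity d ρ})

/-- The dynamical coherence measure `𝔠_C(Θ) = inf_{Λ channel, CMIO for C} |P_C(Θ; Λ)|`. -/
noncomputable def dynCoh (d : ℕ) (C : Matrix (Fin d) (Fin d) ℂ → ℝ)
    (Θ : Matrix (Fin d) (Fin d) ℂ → Matrix (Fin d) (Fin d) ℂ) : ℝ :=
  sInf ((fun Λ => |power d C Θ Λ|) '' {Λ | IsChannel d Λ ∧ IsCMIO d C Λ})

/-! For each state ρ, convexity of `C` at the states `Θ₁ ρ`, `Θ₂ ρ` bounds the difference for the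
mixed channel by the same convex combination of the differences for `Θ₁` and `Θ₂`, each at most
its supremum. Boundedness of `C` on states is what makes those suprema genuine upper bounds. -/

theorem IsChannel.isDensity {d : ℕ} {Λ : Matrix (Fin d) (Fin d) ℂ → Matrix (Fin d) (Fin d) ℂ}
    (hΛ : IsChannel d Λ) {ρ : Matrix (Fin d) (Fin d) ℂ} (hρ : IsDensity d ρ) :
    IsDensity d (Λ ρ) := by
  obtain ⟨m, K, hK, hsum⟩ := hΛ
  rw [hK]
  refine ⟨posSemidef_sum _ fun i _ => hρ.1.mul_mul_conjTranspose_same (K i), ?_⟩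
  calc (∑ i, K i * ρ * (K i)ᴴ).trace = ∑ i, ((K i)ᴴ * K i * ρ).trace := by
        rw [trace_sum]; exact Finset.sum_congr rfl fun i _ => trace_mul_cycle _ _ _
    _ = ((∑ i, (K i)ᴴ * K i) * ρ).trace := by rw [Finset.sum_mul, trace_sum]
    _ = 1 := by rw [hsum, one_mul, hρ.2]

section Power

variable {d : ℕ} {C : Matrix (Fin d) (Fin d) ℂ → ℝ}
  {Θ Λ : Matrix (Fin d) (Fin d) ℂ → Matrix (Fin d) (Fin d) ℂ}

theorem bddAbove_power_image (hb : BoundedOnD d C) (hΘ : IsChannel d Θ) (hΛ : IsChannel d Λ) :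
    BddAbove ((fun ρ => C (Θ ρ) - C (Λ ρ)) '' {ρ | IsDensity d ρ}) := by
  obtain ⟨M, hM⟩ := hb
  refine ⟨2 * M, ?_⟩
  rintro _ ⟨ρ, hρ, rfl⟩
  have hΘM := abs_le.mp (hM _ (hΘ.isDensity hρ))
  have hΛM := abs_le.mp (hM _ (hΛ.isDensity hρ))
  dsimp only
  linarith [hΘM.2, hΛM.1]

theorem le_power (hb : BoundedOnD d C) (hΘ : IsChannel d Θ) (hΛ : IsChannel d Λ)
    {ρ : Matrix (Fin d) (Fin d) ℂ} (hρ : IsDensity d ρ) :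
    C (Θ ρ) - C (Λ ρ) ≤ power d C Θ Λ :=
  le_csSup (bddAbove_power_image hb hΘ hΛ) ⟨ρ, hρ, rfl⟩

end Power

theorem stmt2 (d : ℕ) (C : Matrix (Fin d) (Fin d) ℂ → ℝ)
    (hb : BoundedOnD d C) (hconv : ConvexOnD d C)
    (Θ₁ Θ₂ Λ : Matrix (Fin d) (Fin d) ℂ → Matrix (Fin d) (Fin d) ℂ)
    (hΘ₁ : IsChannel d Θ₁) (hΘ₂ : IsChannel d Θ₂) (hΛ : IsChannel d Λ)
    (t : ℝ) (ht : t ∈ Set.Icc (0 : ℝ) 1) :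
    power d C (fun ρ => t • Θ₁ ρ + (1 - t) • Θ₂ ρ) Λ ≤
      t * power d C Θ₁ Λ + (1 - t) * power d C Θ₂ Λ := by
  obtain ⟨ht0, ht1⟩ := ht
  rcases {ρ | IsDensity d ρ}.eq_empty_or_nonempty with hD | hD
  · simp [power, hD]  -- only for `d = 0`, where both sides are `sSup ∅ = 0`
  refine csSup_le (hD.image _) ?_
  rintro _ ⟨ρ, hρ, rfl⟩
  have hmix := hconv t ⟨ht0, ht1⟩ _ _ (hΘ₁.isDensity hρ) (hΘ₂.isDensity hρ)
  have h₁ := mul_le_mul_of_nonneg_left (le_power hb hΘ₁ hΛ hρ) ht0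
  have h₂ := mul_le_mul_of_nonneg_left (le_power hb hΘ₂ hΛ hρ) (sub_nonneg.mpr ht1)
  dsimp only
  linarith
end

section
/- Let C be a real-valued function on d×d complex matrices that is bounded on the set D of density matrices, and let Θ be a quantum channel. If Θ is a CMIO for C, then 𝔠_C(Θ) = 0. If Θ is not a CMIO for C, then 𝔠_C(Θ) = P_C(Θ; id) and this quantity is strictly positive, where id is the identity channel. -/
open Matrix ComplexOrder

/-! The identity is itself a CMIO, and for any CMIO `Λ` one has `C(Θ ρ) - C(Λ ρ) ≥ C(Θ ρ) - C(ρ)`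
pointwise, so `P_C(Θ; Λ) ≥ P_C(Θ; id)`. Hence when `Θ` is not a CMIO, `P_C(Θ; id) > 0` and the
infimum defining `𝔠_C(Θ)` is attained at the identity; when `Θ` is a CMIO, it is attained at `Θ`
itself, with `P_C(Θ; Θ) = 0`. Boundedness of `C` on `D` is what makes the suprema genuine, since
`sSup` of an unbounded set of reals is `0`. -/

section

variable {d : ℕ} {C : Matrix (Fin d) (Fin d) ℂ → ℝ}
  {Θ Λ : Matrix (Fin d) (Fin d) ℂ → Matrix (Fin d) (Fin d) ℂ}

theorem IsChannel.isDensity_apply (hΛ : IsChannel d Λ) {ρ : Matrix (Fin d) (Fin d) ℂ}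
    (hρ : IsDensity d ρ) : IsDensity d (Λ ρ) := by
  obtain ⟨m, K, hΛK, hK⟩ := hΛ
  rw [hΛK ρ]
  refine ⟨Matrix.posSemidef_sum _ fun i _ => hρ.1.mul_mul_conjTranspose_same (K i), ?_⟩
  simp_rw [Matrix.trace_sum, Matrix.trace_mul_cycle (K _) ρ, ← Matrix.trace_sum, ← Finset.sum_mul,
    hK, one_mul, hρ.2]

theorem isChannel_id (d : ℕ) : IsChannel d id :=
  ⟨1, fun _ => 1, fun ρ => by simp, by simp⟩

theorem isCMIO_id (d : ℕ) (C : Matrix (Fin d) (Fin d) ℂ → ℝ) : IsCMIO d C id :=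
  fun _ _ => le_rfl

theorem power_self : power d C Θ Θ = 0 := by
  simp only [power, sub_self]
  rcases Set.eq_empty_or_nonempty {ρ | IsDensity d ρ} with hD | hD
  · simp [hD]
  · simp [hD.image_const]

theorem bddAbove_power_set (hC : BoundedOnD d C) (hΘ : IsChannel d Θ) (hΛ : IsChannel d Λ) :
    BddAbove ((fun ρ => C (Θ ρ) - C (Λ ρ)) '' {ρ | IsDensity d ρ}) := by
  obtain ⟨M, hM⟩ := hC
  refine ⟨M + M, ?_⟩
  rintro _ ⟨ρ, hρ, rfl⟩
  have hΘρ := abs_le.mp (hM _ (hΘ.isDensity_apply hρ))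
  have hΛρ := abs_le.mp (hM _ (hΛ.isDensity_apply hρ))
  dsimp only
  linarith [hΘρ.2, hΛρ.1]

theorem sub_le_power (hC : BoundedOnD d C) (hΘ : IsChannel d Θ) (hΛ : IsChannel d Λ)
    {ρ : Matrix (Fin d) (Fin d) ℂ} (hρ : IsDensity d ρ) :
    C (Θ ρ) - C (Λ ρ) ≤ power d C Θ Λ :=
  le_csSup (bddAbove_power_set hC hΘ hΛ) ⟨ρ, hρ, rfl⟩

theorem power_id_le_power_of_isCMIO (hC : BoundedOnD d C) (hΘ : IsChannel d Θ)
    (hΛ : IsChannel d Λ) (hΛC : IsCMIO d C Λ) (hD : ∃ ρ, IsDensity d ρ) :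
    power d C Θ id ≤ power d C Θ Λ := by
  obtain ⟨ρ₀, hρ₀⟩ := hD
  refine csSup_le ⟨_, ρ₀, hρ₀, rfl⟩ ?_
  rintro _ ⟨ρ, hρ, rfl⟩
  calc C (Θ ρ) - C ρ ≤ C (Θ ρ) - C (Λ ρ) := sub_le_sub_left (hΛC ρ hρ) _
    _ ≤ power d C Θ Λ := sub_le_power hC hΘ hΛ hρ

theorem dynCoh_eq_abs_power (hΛ : IsChannel d Λ) (hΛC : IsCMIO d C Λ)
    (hmin : ∀ Λ', IsChannel d Λ' → IsCMIO d C Λ' → |power d C Θ Λ| ≤ |power d C Θ Λ'|) :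
    dynCoh d C Θ = |power d C Θ Λ| :=
  IsLeast.csInf_eq ⟨⟨Λ, ⟨hΛ, hΛC⟩, rfl⟩, by rintro _ ⟨Λ', ⟨hΛ', hΛ'C⟩, rfl⟩; exact hmin Λ' hΛ' hΛ'C⟩

end

theorem stmt5 (d : ℕ) (C : Matrix (Fin d) (Fin d) ℂ → ℝ) (hb : BoundedOnD d C)
    (Θ : Matrix (Fin d) (Fin d) ℂ → Matrix (Fin d) (Fin d) ℂ) (hΘ : IsChannel d Θ) :
    (IsCMIO d C Θ → dynCoh d C Θ = 0) ∧
    (¬ IsCMIO d C Θ → dynCoh d C Θ = power d C Θ id ∧ 0 < power d C Θ id) := by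
  refine ⟨fun hΘC => ?_, fun hΘC => ?_⟩
  · rw [dynCoh_eq_abs_power hΘ hΘC fun _ _ _ => by simp [power_self], power_self, abs_zero]
  obtain ⟨ρ₀, hρ₀, hgain⟩ : ∃ ρ, IsDensity d ρ ∧ C ρ < C (Θ ρ) := by
    simpa [IsCMIO] using hΘC
  have hpos : 0 < power d C Θ id :=
    (sub_pos.mpr hgain).trans_le (sub_le_power hb hΘ (isChannel_id d) hρ₀)
  have hmin : ∀ Λ, IsChannel d Λ → IsCMIO d C Λ → |power d C Θ id| ≤ |power d C Θ Λ| :=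
    fun Λ hΛ hΛC => by
      rw [abs_of_pos hpos]
      exact (power_id_le_power_of_isCMIO hb hΘ hΛ hΛC ⟨ρ₀, hρ₀⟩).trans (le_abs_self _)
  rw [dynCoh_eq_abs_power (isChannel_id d) (isCMIO_id d C) hmin, abs_of_pos hpos]
  exact ⟨rfl, hpos⟩
end

section
/- For every unit vector ψ ∈ ℂ², the Shannon entropy of the POVM outcome distribution satisfies H[{p_k(|ψ⟩⟨ψ|)}] ≥ 3/2, with equality if and only if |ψ⟩⟨ψ| = |φ_m⟩⟨φ_m| for some m ∈ {0,1,2,3}. -/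
open Matrix ComplexOrder

/-- The POVM vectors `|φ_k⟩ = (|0⟩ + i^k |1⟩)/√2` for `k = 0,1,2,3`. -/
noncomputable def phiv (k : Fin 4) : Fin 2 → ℂ :=
  ![(1 : ℂ) / Real.sqrt 2, Complex.I ^ (k : ℕ) / Real.sqrt 2]

/-- The outer product `|ψ⟩⟨ψ|`. -/
def outer (ψ : Fin 2 → ℂ) : Matrix (Fin 2) (Fin 2) ℂ :=
  vecMulVec ψ (star ψ)

/-- The POVM outcome probabilities `p_k(ρ) = (1/2)⟨φ_k|ρ|φ_k⟩`. -/
noncomputable def pk (ρ : Matrix (Fin 2) (Fin 2) ℂ) (k : Fin 4) : ℝ :=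
  (star (phiv k) ⬝ᵥ ρ.mulVec (phiv k)).re / 2

/-- `-x log₂ x`, with the convention `0 log₂ 0 = 0`. -/
noncomputable def ent2 (x : ℝ) : ℝ := -(x * Real.logb 2 x)

/-- The Shannon entropy (base 2) of the POVM outcome distribution of `ρ`. -/
noncomputable def H4 (ρ : Matrix (Fin 2) (Fin 2) ℂ) : ℝ := ∑ k : Fin 4, ent2 (pk ρ k)

/-- The binary entropy `h(λ)` (base 2). -/
noncomputable def binEnt (l : ℝ) : ℝ := ent2 l + ent2 (1 - l)

/-- A qubit density matrix: positive semidefinite with trace 1. -/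
def IsDensity2 (ρ : Matrix (Fin 2) (Fin 2) ℂ) : Prop :=
  ρ.PosSemidef ∧ ρ.trace = 1

/-
Write `p_k = (1 + 2 Re(ī^k w)) / 4` with `w = ρ₁₀`, so that the four outcomes pair up as
`(1 ± t) / 4` with `t = 2 Re w` and `t = 2 Im w`, and
`H = 1 + (h((1 + 2 Re w)/2) + h((1 + 2 Im w)/2)) / 2` with `h` the binary entropy.
The key estimate is `h((1 + t)/2) ≥ 1 - t²` on `[-1, 1]`: by the power series
`(1+t) log(1+t) + (1-t) log(1-t) = ∑ t^(2k+2) / ((2k+1)(k+1))`, whose coefficients are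
positive, this function divided by `t²` is strictly increasing in `|t|` and so bounded by its
value `2 log 2` at `t = 1`, with equality only at `t = 0` and `|t| = 1`.
Hence `H ≥ 2 - 2|w|² ≥ 3/2`, since positivity of `ρ` gives `|w|² ≤ ρ₀₀ ρ₁₁ ≤ 1/4`. Equality forces
`|w| = 1/2` and `2 Re w, 2 Im w ∈ {0, ±1}`, i.e. `2w = i^m`, and then `ρ₀₀ = ρ₁₁ = 1/2`,
so `ρ = |φ_m⟩⟨φ_m|`.
-/

open Real Set

lemma ent2_div_two (u : ℝ) : ent2 (u / 2) = ent2 u / 2 + u / 2 := by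
  rcases eq_or_ne u 0 with rfl | hu
  · simp [ent2]
  · simp only [ent2, logb, log_div hu two_ne_zero]
    field_simp
    ring

lemma ent2_one_add_div_four_add (s : ℝ) :
    ent2 ((1 + s) / 4) + ent2 ((1 - s) / 4) = 1 / 2 + binEnt ((1 + s) / 2) / 2 := by
  rw [show (1 + s) / 4 = (1 + s) / 2 / 2 by ring, show (1 - s) / 4 = (1 - s) / 2 / 2 by ring,
    ent2_div_two ((1 + s) / 2), ent2_div_two ((1 - s) / 2), binEnt,
    show 1 - (1 + s) / 2 = (1 - s) / 2 by ring]
  ring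

noncomputable def symMulLog (t : ℝ) : ℝ := (1 + t) * log (1 + t) + (1 - t) * log (1 - t)

lemma continuous_symMulLog : Continuous symMulLog := by
  have : symMulLog = fun t => -(negMulLog (1 + t) + negMulLog (1 - t)) := by
    funext t
    simp only [symMulLog, negMulLog]
    ring
  rw [this]
  fun_prop

lemma symMulLog_of_abs_eq_one {t : ℝ} (h : |t| = 1) : symMulLog t = 2 * log 2 := by
  rcases abs_eq zero_le_one |>.mp h with rfl | rfl <;> norm_num [symMulLog]

lemma binEnt_one_add_div_two (t : ℝ) : binEnt ((1 + t) / 2) = 1 - symMulLog t / (2 * log 2) := by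
  have hlog : log 2 ≠ 0 := by positivity
  have key (v : ℝ) : ent2 (v / 2) = v / 2 - v * log v / (2 * log 2) := by
    rcases eq_or_ne v 0 with rfl | hv
    · simp [ent2]
    · simp only [ent2, logb, log_div hv two_ne_zero]
      field_simp
      ring
  rw [binEnt, show 1 - (1 + t) / 2 = (1 - t) / 2 by ring, key, key, symMulLog]
  field_simp
  ring

lemma hasSum_symMulLog {t : ℝ} (h : |t| < 1) :
    HasSum (fun k : ℕ => 1 / ((2 * k + 1) * (k + 1)) * (t ^ 2) ^ (k + 1)) (symMulLog t) := by
  have ht2 : |t ^ 2| < 1 := by rw [abs_pow]; exact pow_lt_one₀ (abs_nonneg t) h two_ne_zero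
  have hlog : log (1 - t ^ 2) = log (1 + t) + log (1 - t) := by
    obtain ⟨h₁, h₂⟩ := abs_lt.mp h
    rw [show 1 - t ^ 2 = (1 + t) * (1 - t) by ring, log_mul] <;> linarith
  have hsum := (hasSum_log_sub_log_of_abs_lt_one h).mul_left t |>.sub
    (hasSum_pow_div_log_of_abs_lt_one ht2)
  rw [sub_neg_eq_add, hlog, show t * (log (1 + t) - log (1 - t)) + (log (1 + t) + log (1 - t))
    = symMulLog t by rw [symMulLog]; ring] at hsum
  have hterm (k : ℕ) : t * (2 * (1 / (2 * k + 1)) * t ^ (2 * k + 1)) - (t ^ 2) ^ (k + 1) / (k + 1)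
      = 1 / ((2 * k + 1) * (k + 1)) * (t ^ 2) ^ (k + 1) := by
    rw [← pow_mul]
    field_simp
    ring
  simpa only [hterm] using hsum

lemma mul_le_mul_of_hasSum_pow_succ {a : ℕ → ℝ} (ha : ∀ k, 0 ≤ a k) {x y F G : ℝ}
    (hx : 0 ≤ x) (hxy : x ≤ y) (hF : HasSum (fun k => a k * x ^ (k + 1)) F)
    (hG : HasSum (fun k => a k * y ^ (k + 1)) G) : y * F ≤ x * G := by
  refine hasSum_le (fun k => ?_) (hF.mul_left y) (hG.mul_left x)
  have := mul_le_mul_of_nonneg_left (pow_le_pow_left₀ hx hxy k)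
    (mul_nonneg (mul_nonneg (ha k) hx) (hx.trans hxy))
  simp only [pow_succ]
  linarith

lemma mul_lt_mul_of_hasSum_pow_succ {a : ℕ → ℝ} (ha : ∀ k, 0 ≤ a k) (ha₁ : 0 < a 1) {x y F G : ℝ}
    (hx : 0 < x) (hxy : x < y) (hF : HasSum (fun k => a k * x ^ (k + 1)) F)
    (hG : HasSum (fun k => a k * y ^ (k + 1)) G) : y * F < x * G := by
  refine hasSum_lt (i := 1) (fun k => ?_) ?_ (hF.mul_left y) (hG.mul_left x)
  · have := mul_le_mul_of_nonneg_left (pow_le_pow_left₀ hx.le hxy.le k)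
      (mul_nonneg (mul_nonneg (ha k) hx.le) (hx.trans hxy).le)
    simp only [pow_succ]
    linarith
  · have := mul_lt_mul_of_pos_left hxy (mul_pos (mul_pos ha₁ hx) (hx.trans hxy))
    simp only [pow_succ, pow_zero, one_mul]
    linarith

lemma symMulLog_le {t : ℝ} (h : |t| ≤ 1) : symMulLog t ≤ 2 * log 2 * t ^ 2 := by
  rcases h.eq_or_lt with h | h
  · rw [symMulLog_of_abs_eq_one h, ← sq_abs, h, one_pow, mul_one]
  have hmono : Ioo |t| 1 ⊆ {u | u ^ 2 * symMulLog t ≤ t ^ 2 * symMulLog u} := fun u hu =>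
    mul_le_mul_of_hasSum_pow_succ (fun k => by positivity) (sq_nonneg t)
      (by rw [← sq_abs t]; gcongr; exact hu.1.le) (hasSum_symMulLog h)
      (hasSum_symMulLog (by rw [abs_of_pos ((abs_nonneg t).trans_lt hu.1)]; exact hu.2))
  have hclosed : IsClosed {u : ℝ | u ^ 2 * symMulLog t ≤ t ^ 2 * symMulLog u} :=
    isClosed_le (by fun_prop) (continuous_const.mul continuous_symMulLog)
  have h1 := hclosed.closure_subset_iff.mpr hmono (by rw [closure_Ioo h.ne]; exact ⟨h.le, le_rfl⟩)
  simp only [mem_ofPred_eq, one_pow, one_mul, symMulLog_of_abs_eq_one abs_one] at h1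
  linarith

lemma symMulLog_lt {t : ℝ} (h₀ : t ≠ 0) (h : |t| < 1) : symMulLog t < 2 * log 2 * t ^ 2 := by
  obtain ⟨u, htu, hu1⟩ := exists_between h
  have ht : 0 < |t| := abs_pos.mpr h₀
  have hu : |u| < 1 := by rw [abs_of_pos (ht.trans htu)]; exact hu1
  have hlt : u ^ 2 * symMulLog t < t ^ 2 * symMulLog u :=
    mul_lt_mul_of_hasSum_pow_succ (fun k => by positivity) (by norm_num) (by positivity)
      (by rw [← sq_abs t]; gcongr) (hasSum_symMulLog h) (hasSum_symMulLog hu)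
  have hle := mul_le_mul_of_nonneg_left (symMulLog_le hu.le) (sq_nonneg t)
  have hu0 : 0 < u ^ 2 := by nlinarith
  nlinarith

lemma one_sub_sq_le_binEnt {t : ℝ} (h : |t| ≤ 1) : 1 - t ^ 2 ≤ binEnt ((1 + t) / 2) := by
  rw [binEnt_one_add_div_two, sub_le_sub_iff_left, div_le_iff₀ (by positivity)]
  linarith [symMulLog_le h]

lemma binEnt_one_add_div_two_eq_iff {t : ℝ} (h : |t| ≤ 1) :
    binEnt ((1 + t) / 2) = 1 - t ^ 2 ↔ t = 0 ∨ |t| = 1 := by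
  rw [binEnt_one_add_div_two, sub_right_inj, div_eq_iff (by positivity)]
  constructor
  · intro heq
    by_contra! hne
    linarith [symMulLog_lt hne.1 (h.lt_of_ne hne.2)]
  · rintro (rfl | h)
    · simp [symMulLog]
    · rw [symMulLog_of_abs_eq_one h, ← sq_abs, h]
      ring

open Complex ComplexConjugate

lemma star_phiv_dotProduct_mulVec (ρ : Matrix (Fin 2) (Fin 2) ℂ) (k : Fin 4) :
    star (phiv k) ⬝ᵥ ρ *ᵥ phiv k
      = (ρ 0 0 + ρ 1 1 + I ^ (k : ℕ) * ρ 0 1 + conj (I ^ (k : ℕ)) * ρ 1 0) / 2 := by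
  have hs : ((Real.sqrt 2 : ℂ)) ^ 2 = 2 := by norm_cast; simp
  have hI : conj (I ^ (k : ℕ)) * I ^ (k : ℕ) = 1 := by
    rw [map_pow, ← mul_pow, conj_I]; simp
  simp only [phiv, dotProduct, mulVec, Fin.sum_univ_two, Pi.star_apply, Matrix.cons_val_zero,
    Matrix.cons_val_one, Complex.star_def, map_div₀, map_one, conj_ofReal]
  field_simp
  rw [hs]
  linear_combination 2 * ρ 1 1 * hI

lemma pk_eq_of_isHermitian {ρ : Matrix (Fin 2) (Fin 2) ℂ} (hρ : ρ.IsHermitian) (htr : ρ.trace = 1)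
    (k : Fin 4) :
    pk ρ k = (1 + 2 * (conj (I ^ (k : ℕ)) * ρ 1 0).re) / 4 := by
  have h01 : ρ 0 1 = conj (ρ 1 0) := (hρ.apply 0 1).symm
  have htr' : (ρ 0 0 + ρ 1 1).re = 1 := by rw [← Matrix.trace_fin_two, htr, one_re]
  rw [pk, star_phiv_dotProduct_mulVec, h01]
  simp only [div_ofNat_re, add_re, mul_re, conj_re, conj_im] at htr' ⊢
  linear_combination htr' / 4

lemma H4_eq_of_isHermitian {ρ : Matrix (Fin 2) (Fin 2) ℂ} (hρ : ρ.IsHermitian) (htr : ρ.trace = 1) :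
    H4 ρ = 1 + (binEnt ((1 + 2 * (ρ 1 0).re) / 2) + binEnt ((1 + 2 * (ρ 1 0).im) / 2)) / 2 := by
  have h₀ := ent2_one_add_div_four_add (2 * (ρ 1 0).re)
  have h₁ := ent2_one_add_div_four_add (2 * (ρ 1 0).im)
  simp only [H4, Fin.sum_univ_four, pk_eq_of_isHermitian hρ htr]
  simp only [Fin.isValue, Fin.coe_ofNat_eq_mod, Nat.zero_mod, pow_zero, map_one, one_mul,
    Nat.one_mod, pow_one, conj_I, neg_mul, neg_re, mul_re, I_re, zero_mul, I_im, zero_sub, neg_neg,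
    Nat.reduceMod, I_sq, map_neg, mul_neg, Nat.mod_succ, pow_three, I_mul_I, mul_one]
  simp only [← sub_eq_add_neg]
  linarith

lemma exists_I_pow_eq_iff {z : ℂ} : (∃ m : Fin 4, z = I ^ (m : ℕ)) ↔
    normSq z = 1 ∧ (z.re = 0 ∨ |z.re| = 1) ∧ (z.im = 0 ∨ |z.im| = 1) := by
  constructor
  · rintro ⟨m, rfl⟩
    fin_cases m <;> norm_num [normSq_apply, pow_three]
  · rintro ⟨hn, hre, him⟩
    rw [normSq_apply] at hn
    rcases hre with hre | hre <;> rcases him with him | him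
    · simp [hre, him] at hn
    · rcases (abs_eq zero_le_one).mp him with him | him
      · exact ⟨1, by apply Complex.ext <;> simp [hre, him]⟩
      · exact ⟨3, by apply Complex.ext <;> simp [hre, him, pow_three]⟩
    · rcases (abs_eq zero_le_one).mp hre with hre | hre
      · exact ⟨0, by apply Complex.ext <;> simp [hre, him]⟩
      · exact ⟨2, by apply Complex.ext <;> simp [hre, him]⟩
    · nlinarith [sq_abs z.re, sq_abs z.im]

lemma outer_phiv (m : Fin 4) :
    outer (phiv m) = !![1 / 2, conj (I ^ (m : ℕ)) / 2; I ^ (m : ℕ) / 2, 1 / 2] := by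
  have hs : (Real.sqrt 2 : ℂ) ^ 2 = 2 := by norm_cast; simp
  have hI : I ^ (m : ℕ) * (-I) ^ (m : ℕ) = 1 := by
    rw [← mul_pow]; simp
  ext i j
  fin_cases i <;> fin_cases j <;> simp [outer, phiv, vecMulVec_apply] <;> field_simp <;>
    simp [hs, hI]

lemma isDensity2_outer {ψ : Fin 2 → ℂ} (hψ : star ψ ⬝ᵥ ψ = 1) : IsDensity2 (outer ψ) :=
  ⟨posSemidef_vecMulVec_self_star ψ, by rw [outer, trace_vecMulVec, dotProduct_comm, hψ]⟩

namespace IsDensity2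

variable {ρ : Matrix (Fin 2) (Fin 2) ℂ} (hρ : IsDensity2 ρ)
include hρ

lemma re_add_re : (ρ 0 0).re + (ρ 1 1).re = 1 := by
  rw [← add_re, ← Matrix.trace_fin_two, hρ.2, one_re]

lemma normSq_le_re_mul_re : normSq (ρ 1 0) ≤ (ρ 0 0).re * (ρ 1 1).re := by
  have hdet := (Complex.nonneg_iff.mp hρ.1.det_nonneg).1
  have h01 : ρ 0 1 = conj (ρ 1 0) := (hρ.1.isHermitian.apply 0 1).symm
  have him (i : Fin 2) : (ρ i i).im = 0 := by
    rw [← hρ.1.isHermitian.coe_re_apply_self i]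
    simp
  rw [Matrix.det_fin_two, h01] at hdet
  simp only [sub_re, mul_re, conj_re, conj_im, him] at hdet
  rw [normSq_apply]
  linarith

lemma normSq_le : normSq (ρ 1 0) ≤ 1 / 4 := by
  nlinarith [hρ.normSq_le_re_mul_re, hρ.re_add_re, sq_nonneg ((ρ 0 0).re - (ρ 1 1).re)]

lemma eq_outer_phiv_iff (m : Fin 4) : ρ = outer (phiv m) ↔ 2 * ρ 1 0 = I ^ (m : ℕ) := by
  rw [outer_phiv]
  constructor
  · intro h
    rw [h]
    simp only [of_apply, cons_val_one, cons_val_zero]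
    field_simp
  · intro h
    have hw : ρ 1 0 = I ^ (m : ℕ) / 2 := by rw [← h]; ring
    have hnorm : normSq (ρ 1 0) = 1 / 4 := by
      rw [hw, normSq_div, map_pow, normSq_I]; norm_num
    have hsum := hρ.re_add_re
    have hprod := hρ.normSq_le_re_mul_re
    have h00 : (ρ 0 0).re = 1 / 2 := by nlinarith [sq_nonneg ((ρ 0 0).re - (ρ 1 1).re)]
    have h11 : (ρ 1 1).re = 1 / 2 := by linarith
    have hdiag (i : Fin 2) : ρ i i = (ρ i i).re := (hρ.1.isHermitian.coe_re_apply_self i).symm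
    have h01 : ρ 0 1 = conj (ρ 1 0) := (hρ.1.isHermitian.apply 0 1).symm
    rw [eta_fin_two ρ, hdiag 0, hdiag 1, h00, h11, h01, hw]
    simp [conj_ofNat]

lemma sq_add_sq_le : (2 * (ρ 1 0).re) ^ 2 + (2 * (ρ 1 0).im) ^ 2 ≤ 1 := by
  linarith [hρ.normSq_le, normSq_apply (ρ 1 0)]

lemma abs_two_mul_re_le : |2 * (ρ 1 0).re| ≤ 1 :=
  (sq_le_one_iff_abs_le_one _).mp (by nlinarith [hρ.sq_add_sq_le])

lemma abs_two_mul_im_le : |2 * (ρ 1 0).im| ≤ 1 :=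
  (sq_le_one_iff_abs_le_one _).mp (by nlinarith [hρ.sq_add_sq_le])

lemma three_halves_le_H4 : 3 / 2 ≤ H4 ρ := by
  rw [H4_eq_of_isHermitian hρ.1.isHermitian hρ.2]
  linarith [one_sub_sq_le_binEnt hρ.abs_two_mul_re_le, one_sub_sq_le_binEnt hρ.abs_two_mul_im_le,
    hρ.sq_add_sq_le]

lemma H4_eq_three_halves_iff : H4 ρ = 3 / 2 ↔ ∃ m : Fin 4, 2 * ρ 1 0 = I ^ (m : ℕ) := by
  have hre : (2 * ρ 1 0).re = 2 * (ρ 1 0).re := by simp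
  have him : (2 * ρ 1 0).im = 2 * (ρ 1 0).im := by simp
  have hn : normSq (2 * ρ 1 0) = (2 * (ρ 1 0).re) ^ 2 + (2 * (ρ 1 0).im) ^ 2 := by
    rw [normSq_apply, hre, him]; ring
  have hre' := one_sub_sq_le_binEnt hρ.abs_two_mul_re_le
  have him' := one_sub_sq_le_binEnt hρ.abs_two_mul_im_le
  have hsq := hρ.sq_add_sq_le
  rw [H4_eq_of_isHermitian hρ.1.isHermitian hρ.2, exists_I_pow_eq_iff, hn, hre, him,
    ← binEnt_one_add_div_two_eq_iff hρ.abs_two_mul_re_le,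
    ← binEnt_one_add_div_two_eq_iff hρ.abs_two_mul_im_le]
  constructor
  · intro h
    refine ⟨by linarith, by linarith, by linarith⟩
  · rintro ⟨h₀, h₁, h₂⟩
    linarith

end IsDensity2

theorem stmt12 (ψ : Fin 2 → ℂ) (hψ : star ψ ⬝ᵥ ψ = 1) :
    3 / 2 ≤ H4 (outer ψ) ∧
      (H4 (outer ψ) = 3 / 2 ↔ ∃ m : Fin 4, outer ψ = outer (phiv m)) := by
  have hρ := isDensity2_outer hψ
  simp only [hρ.three_halves_le_H4, hρ.H4_eq_three_halves_iff, hρ.eq_outer_phiv_iff, true_and]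
end

section
/- Let U_max = (1/√2)·(|0⟩(⟨0|+⟨1|) + |1⟩(⟨0|−⟨1|)) be the Hadamard unitary and let ρ₊ = |+⟩⟨+| with |+⟩ = (|0⟩+|1⟩)/√2. Then H[{p_k(U_max ρ₊ U_max†)}] = 2 and H[{p_k(ρ₊)}] = 3/2, so the unitary channel ρ ↦ U_max ρ U_max† increases the POVM-based coherence C_{E,r} of the pure state ρ₊ by exactly 1/2, saturating the bound 1/2 on the coherence increase achievable by unitary channels. -/
open Matrix ComplexOrder

/-- The Hadamard unitary `U_max`. -/
noncomputable def Umax : Matrix (Fin 2) (Fin 2) ℂ :=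
  ((1 : ℂ) / Real.sqrt 2) • !![1, 1; 1, -1]

/-- The state `|+⟩ = (|0⟩ + |1⟩)/√2`. -/
noncomputable def plusv : Fin 2 → ℂ :=
  ![(1 : ℂ) / Real.sqrt 2, (1 : ℂ) / Real.sqrt 2]

/-! Since `U_max |+⟩ = |0⟩`, conjugating `ρ₊` by `U_max` gives `|0⟩⟨0|`. For a pure state
`|ψ⟩⟨ψ|` the outcome probabilities are `p_k = |⟨φ_k|ψ⟩|² / 2`: for `|0⟩` all four equal `1/4`
(entropy `2`), while for `|+⟩` they are `(1 + Re i^k)/4`, i.e. `1/2, 1/4, 0, 1/4` (entropy `3/2`). -/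

open Complex ComplexConjugate

lemma mul_outer_mul_conjTranspose (U : Matrix (Fin 2) (Fin 2) ℂ) (ψ : Fin 2 → ℂ) :
    U * outer ψ * Uᴴ = outer (U *ᵥ ψ) := by
  rw [outer, mul_vecMulVec, vecMulVec_mul, ← star_mulVec, outer]

lemma pk_outer (ψ : Fin 2 → ℂ) (k : Fin 4) :
    pk (outer ψ) k = normSq (star (phiv k) ⬝ᵥ ψ) / 2 := by
  rw [pk, outer, vecMulVec_mulVec, op_smul_eq_smul, dotProduct_smul, star_dotProduct ψ,
    smul_eq_mul, Complex.star_def, ← normSq_eq_conj_mul_self, ofReal_re]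

lemma inv_sqrt_two_mul_self : ((√2 : ℝ) : ℂ)⁻¹ * ((√2 : ℝ) : ℂ)⁻¹ = 2⁻¹ := by
  rw [← mul_inv, ← ofReal_mul, Real.mul_self_sqrt zero_le_two, ofReal_ofNat]

lemma Umax_mulVec_plusv : Umax *ᵥ plusv = ![1, 0] := by
  ext i
  fin_cases i <;>
    norm_num [Umax, plusv, mulVec, dotProduct, Fin.sum_univ_two, inv_sqrt_two_mul_self]

lemma star_phiv_dotProduct_ket0 (k : Fin 4) :
    star (phiv k) ⬝ᵥ ![1, 0] = ((√2 : ℝ) : ℂ)⁻¹ := by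
  simp [phiv, dotProduct, Fin.sum_univ_two]

lemma star_phiv_dotProduct_plusv (k : Fin 4) :
    star (phiv k) ⬝ᵥ plusv = (1 + conj (I ^ (k : ℕ))) / 2 := by
  simp only [phiv, plusv, dotProduct, Fin.sum_univ_two, Pi.star_apply, Matrix.cons_val_zero,
    Matrix.cons_val_one, star_def, map_div₀, map_one, conj_ofReal]
  linear_combination (1 + conj (I ^ (k : ℕ))) * inv_sqrt_two_mul_self

lemma normSq_one_add_conj_div_two {w : ℂ} (hw : normSq w = 1) :
    normSq ((1 + conj w) / 2) = (1 + w.re) / 2 := by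
  rw [normSq_apply] at hw
  simp only [normSq_apply, div_re, div_im, add_re, add_im, conj_re, conj_im, one_re, one_im]
  norm_num
  linear_combination hw / 4

lemma pk_outer_ket0 (k : Fin 4) : pk (outer ![1, 0]) k = 1 / 4 := by
  rw [pk_outer, star_phiv_dotProduct_ket0, normSq_inv, normSq_ofReal,
    Real.mul_self_sqrt zero_le_two]
  norm_num

lemma pk_outer_plusv (k : Fin 4) : pk (outer plusv) k = (1 + (I ^ (k : ℕ)).re) / 4 := by
  rw [pk_outer, star_phiv_dotProduct_plusv, normSq_one_add_conj_div_two (by simp)]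
  ring

lemma ent2_inv_two_pow (n : ℕ) : ent2 ((2 ^ n)⁻¹) = n / 2 ^ n := by
  rw [ent2, Real.logb_inv, Real.logb_pow, Real.logb_self_eq_one one_lt_two]
  ring

lemma ent2_zero : ent2 0 = 0 := by simp [ent2]

theorem stmt16 :
    H4 (Umax * outer plusv * Umaxᴴ) = 2 ∧ H4 (outer plusv) = 3 / 2 ∧
      H4 (Umax * outer plusv * Umaxᴴ) - H4 (outer plusv) = 1 / 2 := by
  have ent2_half : ent2 (1 / 2) = 1 / 2 := by simpa using ent2_inv_two_pow 1
  have ent2_quarter : ent2 (1 / 4) = 1 / 2 := by convert ent2_inv_two_pow 2 using 1 <;> norm_num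
  have hU : H4 (Umax * outer plusv * Umaxᴴ) = 2 := by
    rw [mul_outer_mul_conjTranspose, Umax_mulVec_plusv, H4]
    simp only [pk_outer_ket0, ent2_quarter, Finset.sum_const, Finset.card_univ, Fintype.card_fin]
    norm_num
  have hplus : H4 (outer plusv) = 3 / 2 := by
    rw [H4, Fin.sum_univ_four]
    simp only [pk_outer_plusv]
    norm_num [ent2_half, ent2_quarter, ent2_zero]
  exact ⟨hU, hplus, by rw [hU, hplus]; norm_num⟩
end
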